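/- Let 0 < q < 1, a < b, and f, g : [a,b] → ℝ with m ≤ f ≤ M and φ ≤ g ≤ Φ on [a,b]. Then |(1/(b−a))·R_q(fg;a,b) − (1/(b−a)²)·R_q(f;a,b)·R_q(g;a,b)| ≤ (1/4)(M−m)(Φ−φ). -/

import Mathlib

/-!
The normalised sum `R_q(h; a, b) / (b - a) = ∑ (1 - q) q^k h(a + (b - a) q^k)` is the expectation
of `k ↦ h(a + (b - a) q^k)` under the geometric distribution on `ℕ` with weights `(1 - q) q^k`,
and all nodes lie in `[a, b]`. The quantity to bound is therefore a covariance of two bounded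
random variables, and Grüss' inequality follows from Cauchy–Schwarz for the covariance together
with Popoviciu's bound `Var[X] ≤ ((M - m) / 2)²`.
-/

open scoped BigOperators
open Set MeasureTheory ProbabilityTheory

namespace ProbabilityTheory

variable {Ω : Type*} {mΩ : MeasurableSpace Ω} {μ : Measure Ω} {X Y : Ω → ℝ}

lemma covariance_sq_le_variance_mul [IsFiniteMeasure μ] (hX : MemLp X 2 μ) (hY : MemLp Y 2 μ) :
    cov[X, Y; μ] ^ 2 ≤ Var[X; μ] * Var[Y; μ] := by
  have hquad : ∀ t : ℝ, 0 ≤ Var[X; μ] * (t * t) + 2 * cov[X, Y; μ] * t + Var[Y; μ] := by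
    intro t
    have htX : MemLp (t • X) 2 μ := hX.const_smul t
    calc 0 ≤ Var[t • X + Y; μ] := variance_nonneg _ _
      _ = cov[t • X + Y, t • X + Y; μ] := (covariance_self (htX.add hY).aemeasurable).symm
      _ = _ := by
        rw [covariance_add_left htX hY (htX.add hY), covariance_add_right htX htX hY,
          covariance_add_right hY htX hY, covariance_smul_left, covariance_smul_left,
          covariance_smul_right, covariance_smul_right, covariance_comm Y X,
          covariance_self hX.aemeasurable, covariance_self hY.aemeasurable]
        ring
  have hdiscrim := discrim_le_zero hquad
  rw [discrim] at hdiscrim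
  linarith

lemma abs_covariance_le_of_bounded [IsProbabilityMeasure μ] {m M φ Φ : ℝ}
    (hX : ∀ᵐ ω ∂μ, X ω ∈ Icc m M) (hY : ∀ᵐ ω ∂μ, Y ω ∈ Icc φ Φ)
    (hXm : AEMeasurable X μ) (hYm : AEMeasurable Y μ) :
    |cov[X, Y; μ]| ≤ (1 / 4) * (M - m) * (Φ - φ) := by
  obtain ⟨_, hmM⟩ := hX.exists
  obtain ⟨_, hφΦ⟩ := hY.exists
  refine abs_le_of_sq_le_sq ?_ <| by nlinarith [hmM.1.trans hmM.2, hφΦ.1.trans hφΦ.2]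
  calc cov[X, Y; μ] ^ 2 ≤ Var[X; μ] * Var[Y; μ] :=
        covariance_sq_le_variance_mul (memLp_of_bounded hX hXm.aestronglyMeasurable 2)
          (memLp_of_bounded hY hYm.aestronglyMeasurable 2)
    _ ≤ ((M - m) / 2) ^ 2 * ((Φ - φ) / 2) ^ 2 :=
        mul_le_mul (variance_le_sq_of_bounded hX hXm) (variance_le_sq_of_bounded hY hYm)
          (variance_nonneg _ _) (sq_nonneg _)
    _ = ((1 / 4) * (M - m) * (Φ - φ)) ^ 2 := by ring

lemma integral_geometricMeasure_eq_mul_tsum {p : unitInterval} (hp : p ≠ 0) (F : ℕ → ℝ) :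
    ∫ n, F n ∂geometricMeasure p = p * ∑' n, F n * (1 - p) ^ n := by
  rw [integral_geometricMeasure hp, ← tsum_mul_left]
  exact tsum_congr fun n => by simp only [smul_eq_mul]; ring

end ProbabilityTheory

/-- q-Grüss inequality for the Riemann-type q-integral. -/
theorem q_gruss_Rq (q a b m M φ Φ : ℝ) (f g : ℝ → ℝ)
    (hq0 : 0 < q) (hq1 : q < 1) (hab : a < b)
    (hf : ∀ x ∈ Icc a b, m ≤ f x ∧ f x ≤ M)
    (hg : ∀ x ∈ Icc a b, φ ≤ g x ∧ g x ≤ Φ) :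
    |(1 / (b - a)) *
          ((b - a) * (1 - q) * ∑' k : ℕ, f (a + (b - a) * q ^ k) * g (a + (b - a) * q ^ k) * q ^ k) -
        (1 / (b - a) ^ 2) *
          ((b - a) * (1 - q) * ∑' k : ℕ, f (a + (b - a) * q ^ k) * q ^ k) *
          ((b - a) * (1 - q) * ∑' k : ℕ, g (a + (b - a) * q ^ k) * q ^ k)| ≤
      (1 / 4) * (M - m) * (Φ - φ) := by
  set x : ℕ → ℝ := fun k => a + (b - a) * q ^ k
  have hx : ∀ k, x k ∈ Icc a b := fun k => by
    have := pow_le_one₀ hq0.le hq1.le (n := k)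
    constructor <;> nlinarith [pow_pos hq0 k]
  let p : unitInterval := ⟨1 - q, by constructor <;> linarith⟩
  have hp : p ≠ 0 := fun h => by simpa [p, sub_eq_zero, hq1.ne'] using congrArg Subtype.val h
  have hμ : ∀ F : ℕ → ℝ, ∫ n, F n ∂geometricMeasure p = (1 - q) * ∑' n, F n * q ^ n := by
    intro F
    rw [integral_geometricMeasure_eq_mul_tsum hp]
    simp only [p, sub_sub_cancel]
  have hF : ∀ᵐ k ∂geometricMeasure p, f (x k) ∈ Icc m M := ae_of_all _ fun k => hf _ (hx k)
  have hG : ∀ᵐ k ∂geometricMeasure p, g (x k) ∈ Icc φ Φ := ae_of_all _ fun k => hg _ (hx k)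
  have hcov : cov[fun k => f (x k), fun k => g (x k); geometricMeasure p] =
      (1 - q) * ∑' k, f (x k) * g (x k) * q ^ k -
        ((1 - q) * ∑' k, f (x k) * q ^ k) * ((1 - q) * ∑' k, g (x k) * q ^ k) := by
    rw [covariance_eq_sub (memLp_of_bounded hF .of_discrete 2)
      (memLp_of_bounded hG .of_discrete 2)]
    simp only [hμ, Pi.mul_apply]
  have hba : b - a ≠ 0 := sub_ne_zero.2 hab.ne'
  calc _ = |cov[fun k => f (x k), fun k => g (x k); geometricMeasure p]| := by
        rw [hcov]; simp only [x]; field_simp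
    _ ≤ _ := abs_covariance_le_of_bounded hF hG .of_discrete .of_discrete
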